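/- Fix an integer j₀ ≥ 2, let C = { Σ_{i∈F} ε_i e_i : F ⊂ ℕ finite, card F ≤ n_{j₀−1}, ε_i ∈ {−1,1} }, and let E be the smallest subset of c₀₀ containing C and closed under the operations: for every j ≥ 1 with j ≠ j₀ and every f_1 < f_2 < ⋯ < f_d in E with d ≤ 5·n_j, the element (1/m_j)(f_1 + ⋯ + f_d) belongs to E. Then for every f ∈ E and every choice of natural numbers k_1 < ⋯ < k_{n_{j₀}}, one has |f( (1/n_{j₀}) Σ_{l=1}^{n_{j₀}} e_{k_l} )| ≤ 1/m_{j₀}². -/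

import Mathlib

noncomputable section

/-- The sequence `m_j`: `m 1 = 2`, `m (j+1) = (m j)^5`, i.e. `m j = 2 ^ 5 ^ (j-1)`. -/
def mseq (j : ℕ) : ℕ := 2 ^ 5 ^ (j - 1)

/-- The sequence `n_j`: `n 1 = 4` and `n (j+1) = (5 n_j) ^ (3 · 5^j)`. -/
def nseq : ℕ → ℕ
  | 0 => 1
  | 1 => 4
  | (j + 2) => (5 * nseq (j + 1)) ^ (3 * 5 ^ (j + 1))

/-- `f < g` for finitely supported functions: every element of the support of `f` is
less than every element of the support of `g`. -/
def BlockLt (f g : ℕ →₀ ℝ) : Prop :=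
  ∀ a ∈ f.support, ∀ b ∈ g.support, a < b

/-- The action of `f ∈ c₀₀` on `x ∈ c₀₀`: `f(x) = ∑ k, f k * x k`. -/
def fapply (f x : ℕ →₀ ℝ) : ℝ := x.sum fun i v => f i * v

/-- The smallest subset `E` of `c₀₀` containing the set
`C = {∑_{i ∈ F} ±e_i : card F ≤ n_{j₀-1}}` and closed under the
`(𝓐_{5 n_j}, 1/m_j)` operations for all `j ≥ 1` with `j ≠ j₀`. -/
inductive Eset (j₀ : ℕ) : (ℕ →₀ ℝ) → Prop
  | base (h : ℕ →₀ ℝ) (hcard : h.support.card ≤ nseq (j₀ - 1))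
      (hval : ∀ k ∈ h.support, h k = 1 ∨ h k = -1) : Eset j₀ h
  | op (j d : ℕ) (hj : 1 ≤ j) (hne : j ≠ j₀) (hd : d ≤ 5 * nseq j) (f : Fin d → (ℕ →₀ ℝ))
      (hmem : ∀ i, Eset j₀ (f i))
      (hblock : ∀ i i' : Fin d, i < i' → BlockLt (f i) (f i')) :
      Eset j₀ ((mseq j : ℝ)⁻¹ • ∑ i, f i)

/-!
Each weight `m_j` divides the coefficients below it by `2 ^ 5 ^ (j - 1)`. Below a weight with
`j > j₀` every coefficient is at most `2 ^ -5 ^ j₀`, while a weight with `j < j₀` has at most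
`5 n_{j₀-1}` children. Hence, for `s ≤ 5 ^ j₀`, at most `(5 n_{j₀-1}) ^ s` coordinates of `f`
exceed `2 ^ -s`. Summing over the dyadic layers of `|f|` on the `n_{j₀} = (5 n_{j₀-1}) ^ S` points
`k_l`, with `S = 3 · 5 ^ (j₀ - 1)`, gives `∑ |f (k_l)| ≤ 3 n_{j₀} 2 ^ -S`, and
`3 · 2 ^ -S ≤ m_{j₀} ^ -2`.
-/

open Finset Function

lemma nseq_pos : ∀ j, 0 < nseq j
  | 0 => by simp [nseq]
  | 1 => by simp [nseq]
  | j + 2 => by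
      have := nseq_pos (j + 1)
      simp only [nseq]
      positivity

lemma nseq_monotone : Monotone nseq := by
  refine monotone_nat_of_le_succ fun j => ?_
  rcases j with _ | j
  · simp [nseq]
  · calc nseq (j + 1) ≤ 5 * nseq (j + 1) := by omega
      _ ≤ (5 * nseq (j + 1)) ^ (3 * 5 ^ (j + 1)) := Nat.le_self_pow (by positivity) _

lemma nseq_of_two_le {j : ℕ} (hj : 2 ≤ j) :
    nseq j = (5 * nseq (j - 1)) ^ (3 * 5 ^ (j - 1)) := by
  obtain ⟨i, rfl⟩ : ∃ i, j = i + 2 := ⟨j - 2, by omega⟩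
  rfl

lemma mseq_cast_inv (j : ℕ) : (mseq j : ℝ)⁻¹ = 2⁻¹ ^ 5 ^ (j - 1) := by
  simp [mseq, inv_pow]

lemma BlockLt.disjoint {f g : ℕ →₀ ℝ} (h : BlockLt f g) : Disjoint f.support g.support :=
  Finset.disjoint_left.2 fun a ha hb => (h a ha a hb).false

lemma pairwise_disjoint_support_of_blockLt {d : ℕ} {f : Fin d → ℕ →₀ ℝ}
    (h : ∀ i i', i < i' → BlockLt (f i) (f i')) :
    Pairwise (Disjoint on fun i => (f i).support) := by
  intro i i' hne
  rcases hne.lt_or_gt with hlt | hlt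
  exacts [(h _ _ hlt).disjoint, (h _ _ hlt).disjoint.symm]

lemma Finsupp.exists_sum_apply_eq_of_pairwise_disjoint {ι α M : Type*} [Fintype ι]
    [AddCommMonoid M] {f : ι → α →₀ M} (hf : Pairwise (Disjoint on fun i => (f i).support))
    {a : α} (ha : a ∈ (∑ i, f i).support) : ∃ i, a ∈ (f i).support ∧ (∑ i, f i) a = f i a := by
  classical
  obtain ⟨i, -, hi⟩ := Finset.mem_biUnion.1 (Finsupp.support_finsetSum ha)
  refine ⟨i, hi, ?_⟩
  rw [Finsupp.finsetSum_apply, Finset.sum_eq_single i (fun i' _ hne => ?_) (by simp)]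
  exact Finsupp.notMem_support_iff.1 (Finset.disjoint_right.1 (hf hne) hi)

def largeSupport (f : ℕ →₀ ℝ) (s : ℕ) : Finset ℕ :=
  {a ∈ f.support | (2 : ℝ)⁻¹ ^ s < |f a|}

lemma largeSupport_eq_empty {f : ℕ →₀ ℝ} {s : ℕ} (h : ∀ a ∈ f.support, |f a| ≤ 2⁻¹ ^ s) :
    largeSupport f s = ∅ :=
  Finset.filter_false_of_mem fun a ha => not_lt.2 (h a ha)

lemma le_inv_two_pow_add_sum_layers {y : ℝ} (hy : y ≤ 1) (S : ℕ) :
    y ≤ (2 : ℝ)⁻¹ ^ S +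
      ∑ t ∈ range S, if (2 : ℝ)⁻¹ ^ (t + 1) < y then 2⁻¹ ^ (t + 1) else 0 := by
  induction S with
  | zero => simpa using hy
  | succ S ih =>
    have hsum :
        (0 : ℝ) ≤ ∑ t ∈ range S, if (2 : ℝ)⁻¹ ^ (t + 1) < y then 2⁻¹ ^ (t + 1) else 0 :=
      sum_nonneg fun t _ => by split_ifs <;> positivity
    have hhalf : (2 : ℝ)⁻¹ ^ (S + 1) + 2⁻¹ ^ (S + 1) = 2⁻¹ ^ S := by ring
    rw [sum_range_succ]
    split_ifs with h
    · linarith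
    · linarith [not_lt.1 h]

lemma sum_range_pow_succ_le {r : ℝ} (hr : 2 ≤ r) (S : ℕ) :
    ∑ t ∈ range S, r ^ (t + 1) ≤ 2 * r ^ S := by
  induction S with
  | zero => simp
  | succ S ih =>
    rw [sum_range_succ, pow_succ]
    nlinarith [pow_nonneg (by linarith : (0 : ℝ) ≤ r) S]

lemma exists_abs_inv_mseq_smul_sum_apply_eq {j d : ℕ} {f : Fin d → ℕ →₀ ℝ}
    (hblock : ∀ i i', i < i' → BlockLt (f i) (f i')) {a : ℕ}
    (ha : a ∈ ((mseq j : ℝ)⁻¹ • ∑ i, f i).support) :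
    ∃ i, a ∈ (f i).support ∧
      |((mseq j : ℝ)⁻¹ • ∑ i, f i) a| = 2⁻¹ ^ 5 ^ (j - 1) * |f i a| := by
  obtain ⟨i, hi, hsum⟩ := Finsupp.exists_sum_apply_eq_of_pairwise_disjoint
    (pairwise_disjoint_support_of_blockLt hblock) (Finsupp.support_smul ha)
  refine ⟨i, hi, ?_⟩
  rw [Finsupp.smul_apply, hsum, smul_eq_mul, abs_mul, mseq_cast_inv, abs_of_pos (by positivity)]

namespace Eset

variable {j₀ : ℕ} {f : ℕ →₀ ℝ}

theorem abs_apply_le_one (hf : Eset j₀ f) (a : ℕ) : |f a| ≤ 1 := by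
  induction hf with
  | base h _ hval =>
    by_cases ha : a ∈ h.support
    · rcases hval a ha with h1 | h1 <;> simp [h1]
    · simp [Finsupp.notMem_support_iff.1 ha]
  | op j d _ _ _ f _ hblock ih =>
    by_cases ha : a ∈ ((mseq j : ℝ)⁻¹ • ∑ i, f i).support
    · obtain ⟨i, -, h⟩ := exists_abs_inv_mseq_smul_sum_apply_eq hblock ha
      rw [h]
      exact mul_le_one₀ (pow_le_one₀ (by norm_num) (by norm_num)) (abs_nonneg _) (ih i)
    · simp [Finsupp.notMem_support_iff.1 ha]

theorem card_largeSupport_le (hf : Eset j₀ f) {s : ℕ} (hs : s ≤ 5 ^ j₀) :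
    #(largeSupport f s) ≤ (5 * nseq (j₀ - 1)) ^ s := by
  have hn : 0 < nseq (j₀ - 1) := nseq_pos _
  induction hf generalizing s with
  | base h hcard hval =>
    rcases s.eq_zero_or_pos with rfl | hs0
    · rw [largeSupport_eq_empty fun a _ => by
        simpa using (base h hcard hval).abs_apply_le_one a]
      simp
    calc #(largeSupport h s) ≤ #h.support := card_filter_le _ _
      _ ≤ nseq (j₀ - 1) := hcard
      _ ≤ (5 * nseq (j₀ - 1)) ^ s :=
        (Nat.le_mul_of_pos_left _ (by norm_num)).trans (Nat.le_self_pow hs0.ne' _)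
  | op j d _ hne hd f hmem hblock ih =>
    set E := 5 ^ (j - 1)
    rcases le_or_gt s E with hsE | hEs
    · rw [largeSupport_eq_empty fun a ha => ?_]
      · simp
      obtain ⟨i, -, h⟩ := exists_abs_inv_mseq_smul_sum_apply_eq hblock ha
      calc |((mseq j : ℝ)⁻¹ • ∑ i, f i) a| = 2⁻¹ ^ E * |f i a| := h
        _ ≤ 2⁻¹ ^ E * 1 := by gcongr; exact (hmem i).abs_apply_le_one a
        _ ≤ 2⁻¹ ^ s := by
          rw [mul_one]; exact pow_le_pow_of_le_one (by norm_num) (by norm_num) hsE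
    have hlow : j ≤ j₀ - 1 := by
      by_contra
      have : 5 ^ j₀ ≤ E := Nat.pow_le_pow_right (by norm_num) (by omega)
      omega
    obtain ⟨t, rfl⟩ : ∃ t, s = E + t := ⟨s - E, by omega⟩
    have hsub : largeSupport ((mseq j : ℝ)⁻¹ • ∑ i, f i) (E + t) ⊆
        univ.biUnion fun i => largeSupport (f i) t := by
      intro a ha
      obtain ⟨ha, hlt⟩ := mem_filter.1 ha
      obtain ⟨i, hi, h⟩ := exists_abs_inv_mseq_smul_sum_apply_eq hblock ha
      refine mem_biUnion.2 ⟨i, mem_univ _, mem_filter.2 ⟨hi, ?_⟩⟩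
      rw [h, pow_add] at hlt
      exact lt_of_mul_lt_mul_left hlt (by positivity)
    have hE1 : 1 ≤ E := Nat.one_le_pow _ _ (by norm_num)
    calc #(largeSupport _ (E + t)) ≤ ∑ i, #(largeSupport (f i) t) :=
          (card_le_card hsub).trans card_biUnion_le
      _ ≤ d * (5 * nseq (j₀ - 1)) ^ t := by
          simpa using sum_le_sum fun i (_ : i ∈ univ) => ih i (s := t) (by omega)
      _ ≤ 5 * nseq (j₀ - 1) * (5 * nseq (j₀ - 1)) ^ t := by
          gcongr
          exact hd.trans (by gcongr; exact nseq_monotone hlow)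
      _ = (5 * nseq (j₀ - 1)) ^ (t + 1) := by ring
      _ ≤ (5 * nseq (j₀ - 1)) ^ (E + t) := Nat.pow_le_pow_right (by omega) (by omega)

end Eset

lemma sum_abs_le_of_abs_le_one {f : ℕ →₀ ℝ} (hf : ∀ a, |f a| ≤ 1) (A : Finset ℕ) (S : ℕ) :
    ∑ a ∈ A, |f a| ≤
      #A * (2 : ℝ)⁻¹ ^ S + ∑ t ∈ range S, (2 : ℝ)⁻¹ ^ (t + 1) * #(largeSupport f (t + 1)) := by
  calc ∑ a ∈ A, |f a|
      ≤ ∑ a ∈ A, ((2 : ℝ)⁻¹ ^ S +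
          ∑ t ∈ range S, if (2 : ℝ)⁻¹ ^ (t + 1) < |f a| then 2⁻¹ ^ (t + 1) else 0) :=
        sum_le_sum fun a _ => le_inv_two_pow_add_sum_layers (hf a) S
    _ = #A * (2 : ℝ)⁻¹ ^ S +
          ∑ t ∈ range S, (2 : ℝ)⁻¹ ^ (t + 1) * #{a ∈ A | (2 : ℝ)⁻¹ ^ (t + 1) < |f a|} := by
        rw [sum_add_distrib, sum_const, sum_comm, nsmul_eq_mul]
        congr 1
        refine sum_congr rfl fun t _ => ?_
        rw [sum_ite, sum_const_zero, add_zero, sum_const, nsmul_eq_mul, mul_comm]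
    _ ≤ _ := by
        gcongr with t
        intro a ha
        obtain ⟨-, hlt⟩ := mem_filter.1 ha
        refine mem_filter.2 ⟨Finsupp.mem_support_iff.2 fun h0 => ?_, hlt⟩
        rw [h0, abs_zero] at hlt
        exact (lt_asymm hlt (by positivity))

theorem Eset.sum_abs_apply_le {j₀ : ℕ} {f : ℕ →₀ ℝ} (hf : Eset j₀ f) (A : Finset ℕ)
    {S : ℕ} (hS : S ≤ 5 ^ j₀) :
    ∑ a ∈ A, |f a| ≤ #A * (2 : ℝ)⁻¹ ^ S + 2 * (5 * nseq (j₀ - 1) / 2 : ℝ) ^ S := by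
  refine (sum_abs_le_of_abs_le_one hf.abs_apply_le_one A S).trans (add_le_add le_rfl ?_)
  have hr : (2 : ℝ) ≤ 5 * nseq (j₀ - 1) / 2 := by
    have : (1 : ℝ) ≤ nseq (j₀ - 1) := by exact_mod_cast nseq_pos _
    linarith
  calc ∑ t ∈ range S, (2 : ℝ)⁻¹ ^ (t + 1) * #(largeSupport f (t + 1))
      ≤ ∑ t ∈ range S, (5 * nseq (j₀ - 1) / 2 : ℝ) ^ (t + 1) := by
        refine sum_le_sum fun t ht => ?_
        rw [div_eq_mul_inv, mul_pow, mul_comm]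
        gcongr
        exact_mod_cast hf.card_largeSupport_le (by have := mem_range.1 ht; omega)
    _ ≤ 2 * (5 * nseq (j₀ - 1) / 2 : ℝ) ^ S := sum_range_pow_succ_le hr S

lemma fapply_smul_sum_single (f : ℕ →₀ ℝ) (c : ℝ) {N : ℕ} (k : Fin N → ℕ) :
    fapply f (c • ∑ l, Finsupp.single (k l) 1) = c * ∑ l, f (k l) := by
  rw [fapply, Finsupp.sum_smul_index' fun _ => mul_zero _,
    ← Finsupp.sum_finsetSum_index (fun _ => by simp) fun _ _ _ => by ring, mul_sum]
  simp [mul_comm]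

lemma three_mul_inv_two_pow_le_inv_mseq_sq {j : ℕ} (hj : 2 ≤ j) :
    3 * (2 : ℝ)⁻¹ ^ (3 * 5 ^ (j - 1)) ≤ 1 / (mseq j : ℝ) ^ 2 := by
  have hP : 2 ≤ 5 ^ (j - 1) :=
    le_trans (by norm_num) (Nat.pow_le_pow_right (by norm_num) (by omega : 1 ≤ j - 1))
  have hsmall : 3 * (2 : ℝ)⁻¹ ^ 5 ^ (j - 1) ≤ 1 :=
    calc 3 * (2 : ℝ)⁻¹ ^ 5 ^ (j - 1) ≤ 3 * 2⁻¹ ^ 2 :=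
          mul_le_mul_of_nonneg_left
            (pow_le_pow_of_le_one (by norm_num) (by norm_num) hP) (by norm_num)
      _ ≤ 1 := by norm_num
  rw [one_div, ← inv_pow, mseq_cast_inv, ← pow_mul,
    show 3 * 5 ^ (j - 1) = 5 ^ (j - 1) + 5 ^ (j - 1) * 2 by ring, pow_add, ← mul_assoc]
  exact mul_le_of_le_one_left (by positivity) hsmall

/-- For every `f ∈ E` (the saturation avoiding the weight `m_{j₀}`)
and natural numbers `k 0 < k 1 < ⋯` (`n_{j₀}` of them), the action of `f` on the
average `(1/n_{j₀}) ∑ l, e_{k l}` is at most `1/m_{j₀}²` in absolute value. -/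
theorem statement17 (j₀ : ℕ) (hj₀ : 2 ≤ j₀) (f : ℕ →₀ ℝ) (hf : Eset j₀ f)
    (k : Fin (nseq j₀) → ℕ) (hk : StrictMono k) :
    |fapply f ((nseq j₀ : ℝ)⁻¹ • ∑ l, Finsupp.single (k l) (1 : ℝ))|
      ≤ 1 / ((mseq j₀ : ℝ)) ^ 2 := by
  set S := 3 * 5 ^ (j₀ - 1)
  have hN : (nseq j₀ : ℝ) = (5 * nseq (j₀ - 1)) ^ S := by
    rw [nseq_of_two_le hj₀]; push_cast; rfl
  have hS : S ≤ 5 ^ j₀ := by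
    have : 5 ^ j₀ = 5 ^ (j₀ - 1) * 5 := by rw [← pow_succ]; congr; omega
    omega
  have hsum : ∑ l, |f (k l)| ≤ 3 * (nseq j₀ * (2 : ℝ)⁻¹ ^ S) := by
    have := hf.sum_abs_apply_le (univ.map ⟨k, hk.injective⟩) hS
    rw [sum_map, card_map, card_univ, Fintype.card_fin] at this
    refine this.trans (le_of_eq ?_)
    rw [hN, ← mul_pow, ← div_eq_mul_inv]
    ring
  have hpos : (0 : ℝ) < nseq j₀ := by exact_mod_cast nseq_pos j₀
  rw [fapply_smul_sum_single, abs_mul, abs_inv, Nat.abs_cast]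
  calc (nseq j₀ : ℝ)⁻¹ * |∑ l, f (k l)|
      ≤ (nseq j₀ : ℝ)⁻¹ * (3 * (nseq j₀ * 2⁻¹ ^ S)) := by
        gcongr
        exact (abs_sum_le_sum_abs _ _).trans hsum
    _ = 3 * 2⁻¹ ^ S := by field_simp
    _ ≤ 1 / (mseq j₀ : ℝ) ^ 2 := three_mul_inv_two_pow_le_inv_mseq_sq hj₀
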